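/- arXiv:0910.2135 — 8 statements merged into one kernel-verified Lean document; each statement's English description precedes it below -/
import Mathlib

section
/- Conversely, every solution of the ODE f'' + tan(θ)·θ'·f' − cos²(θ)·f = 0 on an interval where cos(θ) is nowhere zero is of the form f(x) = c₁·sinh(φ(x)) + c₂·cosh(φ(x)) for some real constants c₁, c₂, where φ is a primitive of cos∘θ. -/
open Real

theorem stmt_1 (I : Set ℝ) (a b : ℝ) (hI : I = Set.Ioo a b)
    (θ φ f f' f'' : ℝ → ℝ)
    (hθ : ContDiff ℝ (⊤ : ℕ∞) θ)
    (hcos : ∀ x ∈ I, Real.cos (θ x) ≠ 0)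
    (hφ : ∀ x ∈ I, HasDerivAt φ (Real.cos (θ x)) x)
    (hf' : ∀ x ∈ I, HasDerivAt f (f' x) x)
    (hf'' : ∀ x ∈ I, HasDerivAt f' (f'' x) x)
    (hode : ∀ x ∈ I,
      f'' x + Real.tan (θ x) * deriv θ x * f' x - (Real.cos (θ x))^2 * f x = 0) :
    ∃ c₁ c₂ : ℝ, ∀ x ∈ I,
      f x = c₁ * Real.sinh (φ x) + c₂ * Real.cosh (φ x) := by
  subst hI
  rcases Set.eq_empty_or_nonempty (Set.Ioo a b) with he | ⟨x₀, hx₀⟩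
  · exact ⟨0, 0, fun x hx => by rw [he] at hx; exact absurd hx (Set.notMem_empty x)⟩
  set A : ℝ → ℝ := fun x => f' x / Real.cos (θ x) with hAdef
  have hθd : ∀ x : ℝ, HasDerivAt θ (deriv θ x) x := fun x =>
    ((hθ.differentiable (by simp)) x).hasDerivAt
  have hA : ∀ x ∈ Set.Ioo a b, HasDerivAt A (Real.cos (θ x) * f x) x := by
    intro x hx
    have hc := hcos x hx
    have hcosθ : HasDerivAt (fun x => Real.cos (θ x)) (-Real.sin (θ x) * deriv θ x) x :=
      (Real.hasDerivAt_cos (θ x)).comp x (hθd x)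
    have h := (hf'' x hx).div hcosθ hc
    convert h using 1
    any_goals rfl
    have hode' := hode x hx
    rw [Real.tan_eq_sin_div_cos] at hode'
    have hf''eq : f'' x = (Real.cos (θ x))^2 * f x - Real.sin (θ x) / Real.cos (θ x) * deriv θ x * f' x := by
      linarith
    rw [hf''eq]
    field_simp
    ring
  have hconst : ∀ (s : ℝ), s^2 = 1 → ∀ x ∈ Set.Ioo a b,
      ((f x + s * A x) * Real.exp (-(s * φ x))) = (f x₀ + s * A x₀) * Real.exp (-(s * φ x₀)) := by
    intro s hs x hx
    set P : ℝ → ℝ := fun y => (f y + s * A y) * Real.exp (-(s * φ y)) with hP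
    have hder : ∀ y ∈ Set.Ioo a b, HasDerivAt P 0 y := by
      intro y hy
      have h1 : HasDerivAt (fun y => f y + s * A y)
          (f' y + s * (Real.cos (θ y) * f y)) y := (hf' y hy).add ((hA y hy).const_mul s)
      have h2 : HasDerivAt (fun y => Real.exp (-(s * φ y)))
          (Real.exp (-(s * φ y)) * (-(s * Real.cos (θ y)))) y := by
        exact (((hφ y hy).const_mul s).neg).exp
      have h := h1.mul h2
      convert h using 1
      any_goals rfl
      have hfy : f' y = Real.cos (θ y) * A y := by
        simp only [hAdef]; field_simp [hcos y hy]
      rw [hfy]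
      linear_combination (Real.exp (-(s * φ y)) * Real.cos (θ y) * A y) * hs
    have := Convex.norm_image_sub_le_of_norm_hasDerivWithin_le (C := 0)
      (f' := fun _ => (0:ℝ)) (fun y hy => (hder y hy).hasDerivWithinAt)
      (fun y _ => by simp) (convex_Ioo a b) hx₀ hx
    simp only [zero_mul] at this
    have := norm_le_zero_iff.mp this
    simpa [hP] using sub_eq_zero.mp this
  obtain ⟨C, hC⟩ : ∃ C, ∀ x ∈ Set.Ioo a b, f x + A x = C * Real.exp (φ x) := by
    refine ⟨(f x₀ + A x₀) * Real.exp (-(φ x₀)), fun x hx => ?_⟩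
    have := hconst 1 (by norm_num) x hx
    simp only [one_mul] at this
    have hex := Real.exp_pos (-(φ x))
    have : (f x + A x) = ((f x₀ + A x₀) * Real.exp (-(φ x₀))) * Real.exp (φ x) := by
      rw [← this]; rw [mul_assoc, ← Real.exp_add]; simp
    linarith
  obtain ⟨D, hD⟩ : ∃ D, ∀ x ∈ Set.Ioo a b, f x - A x = D * Real.exp (-(φ x)) := by
    refine ⟨(f x₀ - A x₀) * Real.exp (φ x₀), fun x hx => ?_⟩
    have := hconst (-1) (by norm_num) x hx
    simp only [neg_one_mul, neg_neg] at this
    have h' : (f x - A x) * Real.exp (φ x) = (f x₀ - A x₀) * Real.exp (φ x₀) := by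
      linear_combination this
    have hne : Real.exp (φ x) ≠ 0 := (Real.exp_pos _).ne'
    rw [Real.exp_neg]
    field_simp
    linear_combination h'
  refine ⟨(C - D) / 2, (C + D) / 2, fun x hx => ?_⟩
  have h1 := hC x hx
  have h2 := hD x hx
  rw [Real.sinh_eq, Real.cosh_eq]
  have : f x = ((f x + A x) + (f x - A x)) / 2 := by ring
  rw [this, h1, h2]
  ring
end

section
/- Let a(x) = c₁·cosh(x) + c₂·sinh(x) with c₁, c₂ ∈ ℝ be nowhere vanishing on an interval I, and set φ(x) = arctan(1/a(x)). Then φ satisfies the ODE φ'' − 2·cot(φ)·(φ')² + cos(φ)·sin(φ) = 0 on I. -/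
/-!
For `φ = arctan (1 / a)` one has `cot φ = a`, `cos φ sin φ = a / (1 + a²)` and
`φ' = -a' / (1 + a²)`. Differentiating once more and using `a'' = a`, which holds for every
combination of `cosh` and `sinh`, the terms `±2 a a'² / (1 + a²)²` and `∓a / (1 + a²)` cancel.
-/

open Real Filter Topology

lemma cos_div_sin_arctan (y : ℝ) : cos (arctan y) / sin (arctan y) = y⁻¹ := by
  rw [← inv_div, ← tan_eq_sin_div_cos, tan_arctan]

lemma cos_mul_sin_arctan (y : ℝ) : cos (arctan y) * sin (arctan y) = y / (1 + y ^ 2) := by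
  rw [cos_arctan, sin_arctan, div_mul_div_comm, one_mul, ← sq, sq_sqrt (by positivity)]

lemma HasDerivAt.arctan_inv {a : ℝ → ℝ} {a' x : ℝ} (ha : HasDerivAt a a' x) (hx : a x ≠ 0) :
    HasDerivAt (fun y => Real.arctan (a y)⁻¹) (-a' / (a x ^ 2 + 1)) x := by
  refine (ha.fun_inv hx).arctan.congr_deriv ?_
  field_simp

section SecondOrder

variable {a b : ℝ → ℝ} {x : ℝ}

lemma deriv_arctan_inv_eventuallyEq (ha : ∀ᶠ y in 𝓝 x, HasDerivAt a (b y) y) (hx : a x ≠ 0) :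
    deriv (fun y => arctan (a y)⁻¹) =ᶠ[𝓝 x] fun y => -b y / (a y ^ 2 + 1) := by
  have hne : ∀ᶠ y in 𝓝 x, a y ≠ 0 := ha.self_of_nhds.continuousAt.eventually_ne hx
  filter_upwards [ha, hne] with y hay hy
  exact (hay.arctan_inv hy).deriv

theorem arctan_inv_ode_of_deriv_deriv_eq_self (ha : ∀ᶠ y in 𝓝 x, HasDerivAt a (b y) y) (hb : HasDerivAt b (a x) x)
    (hx : a x ≠ 0) :
    deriv (deriv fun y => arctan (a y)⁻¹) x
      - 2 * (cos (arctan (a x)⁻¹) / sin (arctan (a x)⁻¹)) * deriv (fun y => arctan (a y)⁻¹) x ^ 2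
      + cos (arctan (a x)⁻¹) * sin (arctan (a x)⁻¹) = 0 := by
  have hφ' := deriv_arctan_inv_eventuallyEq ha hx
  have hφ'' : HasDerivAt (fun y => -b y / (a y ^ 2 + 1))
      ((-a x * (a x ^ 2 + 1) + b x * (2 * a x * b x)) / (a x ^ 2 + 1) ^ 2) x := by
    have hden : HasDerivAt (fun y => a y ^ 2 + 1) (2 * a x * b x) x :=
      ((ha.self_of_nhds.fun_pow 2).add_const 1).congr_deriv (by ring)
    exact (hb.fun_neg.div hden (by positivity)).congr_deriv (by ring)
  rw [hφ'.deriv_eq, hφ''.deriv, hφ'.eq_of_nhds, cos_div_sin_arctan, cos_mul_sin_arctan, inv_inv]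
  field_simp
  ring

end SecondOrder

theorem stmt_2_general (c₁ c₂ : ℝ) (I : Set ℝ)
    (a φ : ℝ → ℝ)
    (ha : a = fun x => c₁ * Real.cosh x + c₂ * Real.sinh x)
    (hne : ∀ x ∈ I, a x ≠ 0)
    (hφ : φ = fun x => Real.arctan (1 / a x)) :
    ∀ x ∈ I,
      deriv (deriv φ) x
        - 2 * (Real.cos (φ x) / Real.sin (φ x)) * (deriv φ x)^2
        + Real.cos (φ x) * Real.sin (φ x) = 0 := by
  intro x hx
  set b : ℝ → ℝ := fun y => c₁ * sinh y + c₂ * cosh y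
  have ha' : ∀ y, HasDerivAt a (b y) y := fun y => ha ▸
    ((hasDerivAt_cosh y).const_mul c₁).add ((hasDerivAt_sinh y).const_mul c₂)
  have hb : ∀ y, HasDerivAt b (a y) y := fun y => ha ▸
    ((hasDerivAt_sinh y).const_mul c₁).add ((hasDerivAt_cosh y).const_mul c₂)
  simp only [one_div] at hφ
  subst hφ
  exact arctan_inv_ode_of_deriv_deriv_eq_self (.of_forall ha') (hb x) (hne x hx)

theorem stmt_2 (c₁ c₂ : ℝ) (I : Set ℝ) (hI : IsOpen I)
    (a φ : ℝ → ℝ)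
    (ha : a = fun x => c₁ * Real.cosh x + c₂ * Real.sinh x)
    (hne : ∀ x ∈ I, a x ≠ 0)
    (hφ : φ = fun x => Real.arctan (1 / a x)) :
    ∀ x ∈ I,
      deriv (deriv φ) x
        - 2 * (Real.cos (φ x) / Real.sin (φ x)) * (deriv φ x)^2
        + Real.cos (φ x) * Real.sin (φ x) = 0 :=
  stmt_2_general c₁ c₂ I a φ ha hne hφ
end

section
/- Let θ : ℝ² → ℝ be a smooth function satisfying θ_x = k·θ_y for a nonzero constant k and the PDE cos(θ)·(θ_x² + θ_y² − 1) − sin(θ)·(θ_xx + θ_yy) = 0, with sin(θ) never vanishing. Then the quantity ((k²+1)·θ_y² − 1)/sin²(θ) is constant. -/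
open Real

private lemma lineX {E : Type*} [NormedAddCommGroup E] [NormedSpace ℝ E]
    (g : ℝ × ℝ → E) (hg : Differentiable ℝ g) (x y : ℝ) :
    HasDerivAt (fun s => g (s, y)) (fderiv ℝ g (x, y) (1, 0)) x := by
  have h1 : HasDerivAt (fun s : ℝ => (s, y)) ((1 : ℝ), (0 : ℝ)) x :=
    (hasDerivAt_id x).prodMk (hasDerivAt_const x y)
  exact (hg (x, y)).hasFDerivAt.comp_hasDerivAt x h1

private lemma lineY {E : Type*} [NormedAddCommGroup E] [NormedSpace ℝ E]
    (g : ℝ × ℝ → E) (hg : Differentiable ℝ g) (x y : ℝ) :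
    HasDerivAt (fun t => g (x, t)) (fderiv ℝ g (x, y) (0, 1)) y := by
  have h1 : HasDerivAt (fun t : ℝ => (x, t)) ((0 : ℝ), (1 : ℝ)) y :=
    (hasDerivAt_const y x).prodMk (hasDerivAt_id y)
  exact (hg (x, y)).hasFDerivAt.comp_hasDerivAt y h1

theorem stmt_11 (θ : ℝ → ℝ → ℝ) (k : ℝ) (hk : k ≠ 0)
    (hsm : ContDiff ℝ (⊤ : ℕ∞) (fun p : ℝ × ℝ => θ p.1 p.2))
    (hsin : ∀ x y, Real.sin (θ x y) ≠ 0)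
    (θx θy θxx θyy : ℝ → ℝ → ℝ)
    (hθx : θx = fun x y => deriv (fun s => θ s y) x)
    (hθy : θy = fun x y => deriv (fun t => θ x t) y)
    (hθxx : θxx = fun x y => deriv (fun s => θx s y) x)
    (hθyy : θyy = fun x y => deriv (fun t => θy x t) y)
    (hrel : ∀ x y, θx x y = k * θy x y)
    (hpde : ∀ x y,
      Real.cos (θ x y) * ((θx x y)^2 + (θy x y)^2 - 1)
        - Real.sin (θ x y) * (θxx x y + θyy x y) = 0) :
    ∃ C : ℝ, ∀ x y,
      ((k^2 + 1) * (θy x y)^2 - 1) / (Real.sin (θ x y))^2 = C := by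
  set f : ℝ × ℝ → ℝ := fun p => θ p.1 p.2 with hf
  have hfd : Differentiable ℝ f := hsm.differentiable (by simp)
  set F : ℝ × ℝ → (ℝ × ℝ →L[ℝ] ℝ) := fderiv ℝ f with hFdef
  have hF : ContDiff ℝ (⊤ : ℕ∞) F := hsm.fderiv_right (m := (⊤ : ℕ∞)) (by simp)
  have hFd : Differentiable ℝ F := hF.differentiable (by simp)
  set H : ℝ × ℝ → (ℝ × ℝ →L[ℝ] (ℝ × ℝ →L[ℝ] ℝ)) := fderiv ℝ F with hHdef
  -- first partials
  have dθx : ∀ x y, HasDerivAt (fun s => θ s y) (F (x, y) (1, 0)) x :=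
    fun x y => lineX f hfd x y
  have dθy : ∀ x y, HasDerivAt (fun t => θ x t) (F (x, y) (0, 1)) y :=
    fun x y => lineY f hfd x y
  have hθx' : ∀ x y, θx x y = F (x, y) (1, 0) := by
    intro x y; simp only [hθx]; exact (dθx x y).deriv
  have hθy' : ∀ x y, θy x y = F (x, y) (0, 1) := by
    intro x y; simp only [hθy]; exact (dθy x y).deriv
  -- derivatives of F applied to a fixed vector
  have dFx : ∀ (v : ℝ × ℝ) (x y : ℝ),
      HasDerivAt (fun s => F (s, y) v) (H (x, y) (1, 0) v) x := by
    intro v x y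
    have h := (lineX F hFd x y).clm_apply (hasDerivAt_const x v)
    simpa using h
  have dFy : ∀ (v : ℝ × ℝ) (x y : ℝ),
      HasDerivAt (fun t => F (x, t) v) (H (x, y) (0, 1) v) y := by
    intro v x y
    have h := (lineY F hFd x y).clm_apply (hasDerivAt_const y v)
    simpa using h
  -- Schwarz symmetry
  have S : ∀ (p : ℝ × ℝ) (v w : ℝ × ℝ), H p v w = H p w v := by
    intro p v w
    exact second_derivative_symmetric (fun q => (hfd q).hasFDerivAt)
      ((hFd p).hasFDerivAt) v w
  -- relation
  have R : ∀ x y, F (x, y) (1, 0) = k * F (x, y) (0, 1) := by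
    intro x y; rw [← hθx', ← hθy']; exact hrel x y
  have mixedY : ∀ x y, H (x, y) (0, 1) (1, 0) = k * H (x, y) (0, 1) (0, 1) := by
    intro x y
    have e1 : HasDerivAt (fun t => F (x, t) (1, 0)) (H (x, y) (0, 1) (1, 0)) y :=
      dFy (1, 0) x y
    have e2 : HasDerivAt (fun t => F (x, t) (1, 0)) (k * H (x, y) (0, 1) (0, 1)) y := by
      have h := (dFy (0, 1) x y).const_mul k
      have : (fun t => k * F (x, t) (0, 1)) = fun t => F (x, t) (1, 0) := by
        funext t; rw [R x t]
      rwa [this] at h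
    exact e1.unique e2
  have mixedX : ∀ x y, H (x, y) (1, 0) (1, 0) = k * H (x, y) (1, 0) (0, 1) := by
    intro x y
    have e1 : HasDerivAt (fun s => F (s, y) (1, 0)) (H (x, y) (1, 0) (1, 0)) x :=
      dFx (1, 0) x y
    have e2 : HasDerivAt (fun s => F (s, y) (1, 0)) (k * H (x, y) (1, 0) (0, 1)) x := by
      have h := (dFx (0, 1) x y).const_mul k
      have : (fun s => k * F (s, y) (0, 1)) = fun s => F (s, y) (1, 0) := by
        funext s; rw [R s y]
      rwa [this] at h
    exact e1.unique e2
  have hθyy' : ∀ x y, θyy x y = H (x, y) (0, 1) (0, 1) := by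
    intro x y
    simp only [hθyy]
    have : (fun t => θy x t) = fun t => F (x, t) (0, 1) := by
      funext t; exact hθy' x t
    rw [this]
    exact (dFy (0, 1) x y).deriv
  have hθxx' : ∀ x y, θxx x y = k ^ 2 * θyy x y := by
    intro x y
    simp only [hθxx]
    have : (fun s => θx s y) = fun s => F (s, y) (1, 0) := by
      funext s; exact hθx' s y
    rw [this, (dFx (1, 0) x y).deriv, mixedX x y, S (x, y) (1, 0) (0, 1),
      mixedY x y, hθyy' x y]
    ring
  -- key identity
  have key : ∀ x y, Real.cos (θ x y) * ((k ^ 2 + 1) * (θy x y) ^ 2 - 1)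
      = (k ^ 2 + 1) * Real.sin (θ x y) * θyy x y := by
    intro x y
    have h := hpde x y
    rw [hrel x y, hθxx' x y] at h
    linear_combination h
  -- derivative of θy along y and x, and of θ
  have dθyY : ∀ x y, HasDerivAt (fun t => θy x t) (θyy x y) y := by
    intro x y
    have : (fun t => θy x t) = fun t => F (x, t) (0, 1) := by
      funext t; exact hθy' x t
    rw [this, hθyy' x y]
    exact dFy (0, 1) x y
  have dθyX : ∀ x y, HasDerivAt (fun s => θy s y) (k * θyy x y) x := by
    intro x y
    have e : (fun s => θy s y) = fun s => F (s, y) (0, 1) := by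
      funext s; exact hθy' s y
    rw [e]
    have h := dFx (0, 1) x y
    rwa [S (x, y) (1, 0) (0, 1), mixedY x y, ← hθyy' x y] at h
  have dθY : ∀ x y, HasDerivAt (fun t => θ x t) (θy x y) y := by
    intro x y; rw [hθy' x y]; exact dθy x y
  have dθX : ∀ x y, HasDerivAt (fun s => θ s y) (k * θy x y) x := by
    intro x y
    have h := dθx x y
    rwa [R x y, ← hθy' x y] at h
  -- the conserved quantity
  set c : ℝ → ℝ → ℝ :=
    fun x y => ((k ^ 2 + 1) * (θy x y) ^ 2 - 1) / (Real.sin (θ x y)) ^ 2 with hc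
  have cY : ∀ x y, HasDerivAt (fun t => c x t) 0 y := by
    intro x y
    have hN : HasDerivAt (fun t => (k ^ 2 + 1) * (θy x t) ^ 2 - 1)
        ((k ^ 2 + 1) * (2 * θy x y * θyy x y)) y := by
      have := ((dθyY x y).pow 2).const_mul (k ^ 2 + 1)
      simpa [mul_comm, mul_assoc, mul_left_comm] using this.sub_const 1
    have hsin' : HasDerivAt (fun t => Real.sin (θ x t)) (Real.cos (θ x y) * θy x y) y :=
      (Real.hasDerivAt_sin (θ x y)).comp y (dθY x y)
    have hD : HasDerivAt (fun t => (Real.sin (θ x t)) ^ 2)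
        (2 * Real.sin (θ x y) * (Real.cos (θ x y) * θy x y)) y := by
      have := hsin'.fun_pow 2
      simpa [mul_comm, mul_assoc, mul_left_comm] using this
    have hD0 : (Real.sin (θ x y)) ^ 2 ≠ 0 := pow_ne_zero 2 (hsin x y)
    have hdiv := hN.div hD hD0
    have hval : ((k ^ 2 + 1) * (2 * θy x y * θyy x y) * (Real.sin (θ x y)) ^ 2
        - ((k ^ 2 + 1) * (θy x y) ^ 2 - 1)
          * (2 * Real.sin (θ x y) * (Real.cos (θ x y) * θy x y)))
        / ((Real.sin (θ x y)) ^ 2) ^ 2 = 0 := by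
      rw [div_eq_zero_iff]; left
      linear_combination (-(2 * θy x y * Real.sin (θ x y))) * key x y
    rwa [hval] at hdiv
  have cX : ∀ x y, HasDerivAt (fun s => c s y) 0 x := by
    intro x y
    have hN : HasDerivAt (fun s => (k ^ 2 + 1) * (θy s y) ^ 2 - 1)
        ((k ^ 2 + 1) * (2 * θy x y * (k * θyy x y))) x := by
      have := ((dθyX x y).pow 2).const_mul (k ^ 2 + 1)
      simpa [mul_comm, mul_assoc, mul_left_comm] using this.sub_const 1
    have hsin' : HasDerivAt (fun s => Real.sin (θ s y))
        (Real.cos (θ x y) * (k * θy x y)) x :=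
      (Real.hasDerivAt_sin (θ x y)).comp (h₂ := Real.sin) x (dθX x y)
    have hD : HasDerivAt (fun s => (Real.sin (θ s y)) ^ 2)
        (2 * Real.sin (θ x y) * (Real.cos (θ x y) * (k * θy x y))) x := by
      have := hsin'.fun_pow 2
      simpa [mul_comm, mul_assoc, mul_left_comm] using this
    have hD0 : (Real.sin (θ x y)) ^ 2 ≠ 0 := pow_ne_zero 2 (hsin x y)
    have hdiv := hN.div hD hD0
    have hval : ((k ^ 2 + 1) * (2 * θy x y * (k * θyy x y)) * (Real.sin (θ x y)) ^ 2
        - ((k ^ 2 + 1) * (θy x y) ^ 2 - 1)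
          * (2 * Real.sin (θ x y) * (Real.cos (θ x y) * (k * θy x y))))
        / ((Real.sin (θ x y)) ^ 2) ^ 2 = 0 := by
      rw [div_eq_zero_iff]; left
      linear_combination (-(2 * k * θy x y * Real.sin (θ x y))) * key x y
    rwa [hval] at hdiv
  refine ⟨c 0 0, fun x y => ?_⟩
  have h1 : c x y = c x 0 :=
    is_const_of_deriv_eq_zero (fun t => (cY x t).differentiableAt)
      (fun t => (cY x t).deriv) y 0
  have h2 : c x 0 = c 0 0 :=
    is_const_of_deriv_eq_zero (fun s => (cX s 0).differentiableAt)
      (fun s => (cX s 0).deriv) x 0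
  exact h1.trans h2
end

section
/- Let φ : I × J → ℝ be a smooth function of (x,y) and θ : I → ℝ smooth with cos(θ) nowhere zero, and suppose (φ_x)²/cos²(θ(x)) − φ² = μ(y)² for a nowhere-zero function μ : J → ℝ, with φ_x/cos(θ) and μ of constant sign. Then there exist functions ψ : J → ℝ and Φ : I → ℝ with Φ' = cos∘θ such that φ(x,y) = μ(y)·sinh(Φ(x) + ψ(y)) (up to sign of μ). -/
open Real

/-- Key lemma: a solution of the ODE system, for one fixed `y`, has the hyperbolic-sine form. -/
lemma stmt_13_key (I : Set ℝ) (hIopen : IsOpen I) (hIconv : Convex ℝ I)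
    (φy θ : ℝ → ℝ) (m ε : ℝ) (hm : 0 < m) (hε : ε = 1 ∨ ε = -1)
    (hd : ∀ x, HasDerivAt φy (deriv φy x) x)
    (hcos : ∀ x ∈ I, Real.cos (θ x) ≠ 0)
    (hsign : ∀ x ∈ I, 0 < ε * (deriv φy x / Real.cos (θ x)))
    (hpde : ∀ x ∈ I, (deriv φy x)^2 / (Real.cos (θ x))^2 - (φy x)^2 = m^2)
    (Φ : ℝ → ℝ) (hΦ : ∀ x, HasDerivAt Φ (Real.cos (θ x)) x)
    (x₀ : ℝ) (hx₀ : x₀ ∈ I) :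
    ∀ x ∈ I, φy x = ε * m * Real.sinh (Φ x + (ε * Real.arsinh (φy x₀ / m) - Φ x₀)) := by
  have hε2 : ε ^ 2 = 1 := by rcases hε with h | h <;> rw [h] <;> norm_num
  set h : ℝ → ℝ := fun x => Real.arsinh (φy x / m) - ε * Φ x with hdefh
  -- the auxiliary function `h` has zero derivative on `I`
  have hh : ∀ x ∈ I, HasDerivAt h 0 x := by
    intro x hx
    have hc := hcos x hx
    set d := deriv φy x with hdd
    set c := Real.cos (θ x) with hcc
    have hpd : d ^ 2 = c ^ 2 * (m ^ 2 + (φy x) ^ 2) := by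
      have := hpde x hx
      rw [← hdd, ← hcc] at this
      field_simp at this ⊢
      nlinarith [this]
    set s := Real.sqrt (m ^ 2 + (φy x) ^ 2) with hss
    have hs_pos : 0 < s := Real.sqrt_pos.2 (by positivity)
    have hs_sq : s ^ 2 = m ^ 2 + (φy x) ^ 2 := Real.sq_sqrt (by positivity)
    -- identify d
    have hdval : d = ε * c * s := by
      have h1 : (d - ε * c * s) * (d + ε * c * s) = 0 := by
        have e : (d - ε * c * s) * (d + ε * c * s) = d ^ 2 - ε ^ 2 * c ^ 2 * s ^ 2 := by ring
        rw [e, hε2, hs_sq, hpd]; ring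
      rcases mul_eq_zero.1 h1 with h2 | h2
      · linarith
      · exfalso
        have hd2 : d = -(ε * c * s) := by linarith
        have hps := hsign x hx
        rw [← hdd, ← hcc] at hps
        have hval : ε * (d / c) = -s := by
          rw [hd2]; field_simp; linear_combination (-1) * hε2
        linarith [hs_pos]
    -- derivative of arsinh composite
    have hsqrt1 : Real.sqrt (1 + (φy x / m) ^ 2) = s / m := by
      have : 1 + (φy x / m) ^ 2 = (s / m) ^ 2 := by
        rw [div_pow, div_pow, hs_sq]; field_simp
      rw [this, Real.sqrt_sq (le_of_lt (div_pos hs_pos hm))]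
    have h1 : HasDerivAt (fun t => Real.arsinh (φy t / m))
        ((Real.sqrt (1 + (φy x / m) ^ 2))⁻¹ * (d / m)) x :=
      (Real.hasDerivAt_arsinh _).comp x ((hd x).div_const m)
    have h2 : HasDerivAt h ((Real.sqrt (1 + (φy x / m) ^ 2))⁻¹ * (d / m) - ε * c) x :=
      h1.sub ((hΦ x).const_mul ε)
    have h3 : (Real.sqrt (1 + (φy x / m) ^ 2))⁻¹ * (d / m) - ε * c = 0 := by
      rw [hsqrt1, hdval]
      field_simp
      nlinarith [hε2]
    rwa [h3] at h2
  -- `h` is constant on `I`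
  have hconst : ∀ x ∈ I, h x = h x₀ := by
    intro x hx
    apply hIconv.is_const_of_fderivWithin_eq_zero
      (fun z hz => ((hh z hz).differentiableAt).differentiableWithinAt) _ hx hx₀
    intro z hz
    rw [fderivWithin_of_isOpen hIopen hz, (hh z hz).hasFDerivAt.fderiv]
    ext
    simp
  -- conclude
  intro x hx
  have hcx := hconst x hx
  simp only [hdefh] at hcx
  have key : Real.arsinh (φy x / m) =
      ε * (Φ x + (ε * Real.arsinh (φy x₀ / m) - Φ x₀)) := by
    rcases hε with hE | hE <;> rw [hE] at hcx ⊢ <;> ring_nf <;> ring_nf at hcx <;> linarith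
  have := congrArg Real.sinh key
  rw [Real.sinh_arsinh] at this
  rcases hε with hE | hE <;> rw [hE] at this ⊢
  · simp only [one_mul] at this ⊢
    field_simp at this
    linarith [this]
  · simp only [neg_one_mul, Real.sinh_neg] at this ⊢
    field_simp at this
    linarith [this]

theorem stmt_13 (I J : Set ℝ) (a b a' b' : ℝ)
    (hI : I = Set.Ioo a b) (hJ : J = Set.Ioo a' b')
    (φ : ℝ → ℝ → ℝ) (θ μ : ℝ → ℝ)
    (hφ : ContDiff ℝ (⊤ : ℕ∞) (fun p : ℝ × ℝ => φ p.1 p.2))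
    (hθ : ContDiff ℝ (⊤ : ℕ∞) θ)
    (hcos : ∀ x ∈ I, Real.cos (θ x) ≠ 0)
    (hμ : (∀ y ∈ J, 0 < μ y) ∨ (∀ y ∈ J, μ y < 0))
    (hsign : (∀ x ∈ I, ∀ y ∈ J, 0 < deriv (fun s => φ s y) x / Real.cos (θ x)) ∨
             (∀ x ∈ I, ∀ y ∈ J, deriv (fun s => φ s y) x / Real.cos (θ x) < 0))
    (hpde : ∀ x ∈ I, ∀ y ∈ J,
      (deriv (fun s => φ s y) x)^2 / (Real.cos (θ x))^2 - (φ x y)^2 = (μ y)^2) :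
    ∃ ψ Φ : ℝ → ℝ,
      (∀ x ∈ I, HasDerivAt Φ (Real.cos (θ x)) x) ∧
      ((∀ x ∈ I, ∀ y ∈ J, φ x y = μ y * Real.sinh (Φ x + ψ y)) ∨
       (∀ x ∈ I, ∀ y ∈ J, φ x y = -(μ y) * Real.sinh (Φ x + ψ y))) := by
  have hcont : Continuous fun t => Real.cos (θ t) :=
    Real.continuous_cos.comp (hθ.continuous)
  set Φ : ℝ → ℝ := fun x => ∫ t in (0:ℝ)..x, Real.cos (θ t) with hΦdef
  have hΦ' : ∀ x : ℝ, HasDerivAt Φ (Real.cos (θ x)) x := fun x =>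
    (hcont.integral_hasStrictDerivAt 0 x).hasDerivAt
  rcases Set.eq_empty_or_nonempty I with hIe | ⟨x₀, hx₀⟩
  · exact ⟨0, Φ, fun x hx => hΦ' x,
      Or.inl fun x hx => by simp [hIe] at hx⟩
  have hIopen : IsOpen I := hI ▸ isOpen_Ioo
  have hIconv : Convex ℝ I := hI ▸ convex_Ioo a b
  have hdφ : ∀ y : ℝ, ∀ x : ℝ, HasDerivAt (fun s => φ s y) (deriv (fun s => φ s y) x) x := by
    intro y x
    have hda : DifferentiableAt ℝ (fun s => φ s y) x := by
      have h1 : DifferentiableAt ℝ (fun p : ℝ × ℝ => φ p.1 p.2) (x, y) :=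
        (hφ.differentiable (by simp)) (x, y)
      exact h1.comp x (((differentiableAt_id (𝕜 := ℝ) (x := x)).prodMk (differentiableAt_const y)) : DifferentiableAt ℝ (fun s : ℝ => (s, y)) x)
    exact hda.hasDerivAt
  have hμne : ∀ y ∈ J, 0 < |μ y| := by
    rcases hμ with h | h <;> intro y hy
    · rw [abs_of_pos (h y hy)]; exact h y hy
    · rw [abs_of_neg (h y hy)]; linarith [h y hy]
  have hpde' : ∀ y ∈ J, ∀ x ∈ I,
      (deriv (fun s => φ s y) x)^2 / (Real.cos (θ x))^2 - (φ x y)^2 = |μ y|^2 := by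
    intro y hy x hx
    rw [sq_abs]
    exact hpde x hx y hy
  -- main case analysis on the sign `ε`
  rcases hsign with hs | hs
  · -- ε = 1
    refine ⟨fun y => 1 * Real.arsinh (φ x₀ y / |μ y|) - Φ x₀, Φ, fun x hx => hΦ' x, ?_⟩
    have main : ∀ y ∈ J, ∀ x ∈ I,
        φ x y = 1 * |μ y| * Real.sinh (Φ x + (1 * Real.arsinh (φ x₀ y / |μ y|) - Φ x₀)) := by
      intro y hy
      exact stmt_13_key I hIopen hIconv (fun s => φ s y) θ (|μ y|) 1 (hμne y hy) (Or.inl rfl)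
        (hdφ y) hcos (fun x hx => by simpa using hs x hx y hy) (hpde' y hy) Φ hΦ' x₀ hx₀
    rcases hμ with h | h
    · refine Or.inl fun x hx y hy => ?_
      simp only [main y hy x hx, abs_of_pos (h y hy)]; ring_nf
    · refine Or.inr fun x hx y hy => ?_
      simp only [main y hy x hx, abs_of_neg (h y hy)]; ring_nf
  · -- ε = -1
    refine ⟨fun y => (-1) * Real.arsinh (φ x₀ y / |μ y|) - Φ x₀, Φ, fun x hx => hΦ' x, ?_⟩
    have main : ∀ y ∈ J, ∀ x ∈ I,
        φ x y = (-1) * |μ y| *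
          Real.sinh (Φ x + ((-1) * Real.arsinh (φ x₀ y / |μ y|) - Φ x₀)) := by
      intro y hy
      exact stmt_13_key I hIopen hIconv (fun s => φ s y) θ (|μ y|) (-1) (hμne y hy) (Or.inr rfl)
        (hdφ y) hcos (fun x hx => by simpa using hs x hx y hy) (hpde' y hy) Φ hΦ' x₀ hx₀
    rcases hμ with h | h
    · refine Or.inr fun x hx y hy => ?_
      simp only [main y hy x hx, abs_of_pos (h y hy)]; ring_nf
    · refine Or.inl fun x hx y hy => ?_
      simp only [main y hy x hx, abs_of_neg (h y hy)]; ring_nf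
end

section
/- Suppose θ : I → (0, π/2) is smooth with θ' = κ₁ constant, and β : I × J → (0,∞) is smooth with tan(θ)·β_x/β = κ₂ constant, and furthermore β_xx + tan(θ)·θ'·β_x − β·cos²(θ) = 0 holds. Then κ₁ = 0, i.e., θ must be constant. -/
open Real

theorem stmt_16 (a b a' b' : ℝ) (hab : a < b) (hab' : a' < b')
    (I J : Set ℝ) (hI : I = Set.Ioo a b) (hJ : J = Set.Ioo a' b')
    (θ : ℝ → ℝ) (β : ℝ → ℝ → ℝ) (κ₁ κ₂ : ℝ)
    (hβ : ContDiff ℝ (⊤ : ℕ∞) (fun p : ℝ × ℝ => β p.1 p.2))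
    (hrange : ∀ x ∈ I, θ x ∈ Set.Ioo 0 (Real.pi / 2))
    (hθ' : ∀ x ∈ I, HasDerivAt θ κ₁ x)
    (hβpos : ∀ x ∈ I, ∀ y ∈ J, 0 < β x y)
    (hκ₂ : ∀ x ∈ I, ∀ y ∈ J,
      Real.tan (θ x) * deriv (fun s => β s y) x / β x y = κ₂)
    (hcompat : ∀ x ∈ I, ∀ y ∈ J,
      deriv (fun s => deriv (fun u => β u y) s) x
        + Real.tan (θ x) * κ₁ * deriv (fun s => β s y) x
        - β x y * (Real.cos (θ x))^2 = 0) :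
    κ₁ = 0 := by
  have hIopen : IsOpen I := by rw [hI]; exact isOpen_Ioo
  set y₀ : ℝ := (a' + b') / 2 with hy₀def
  have hy₀ : y₀ ∈ J := by rw [hJ]; constructor <;> simp [hy₀def] <;> linarith
  set f : ℝ → ℝ := fun x => β x y₀ with hfdef
  have hf : ContDiff ℝ (⊤ : ℕ∞) f := hβ.comp (contDiff_id.prodMk contDiff_const)
  have hfd : Differentiable ℝ f := hf.differentiable (by simp)
  have hsin : ∀ x ∈ I, 0 < Real.sin (θ x) := by
    intro x hx
    obtain ⟨h1, h2⟩ := hrange x hx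
    exact Real.sin_pos_of_pos_of_lt_pi h1 (by linarith [Real.pi_pos])
  have hcos : ∀ x ∈ I, 0 < Real.cos (θ x) := by
    intro x hx
    obtain ⟨h1, h2⟩ := hrange x hx
    exact Real.cos_pos_of_mem_Ioo ⟨by linarith [Real.pi_pos], h2⟩
  -- key first-order identity
  have hkey : ∀ x ∈ I, Real.sin (θ x) * deriv f x = κ₂ * f x * Real.cos (θ x) := by
    intro x hx
    have h1 := hκ₂ x hx y₀ hy₀
    have hb := hβpos x hx y₀ hy₀
    have hs := hsin x hx; have hc := hcos x hx
    rw [Real.tan_eq_sin_div_cos] at h1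
    field_simp at h1
    nlinarith [h1]
  -- sin² identity
  have hsq : ∀ x ∈ I, Real.sin (θ x) ^ 2 = κ₂ ^ 2 - κ₁ * κ₂ := by
    intro x hx
    have hs := hsin x hx; have hc := hcos x hx
    have hb := hβpos x hx y₀ hy₀
    have hθx := hθ' x hx
    -- deriv f equals g on I
    set g : ℝ → ℝ := fun z => κ₂ * f z * Real.cos (θ z) / Real.sin (θ z) with hgdef
    have hfg : ∀ z ∈ I, deriv f z = g z := by
      intro z hz
      have hk := hkey z hz
      have hsz := hsin z hz
      simp only [hgdef]; field_simp
      linarith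
    -- derivative of g at x
    have hnum : HasDerivAt (fun z => κ₂ * f z * Real.cos (θ z))
        (κ₂ * deriv f x * Real.cos (θ x) + κ₂ * f x * (-Real.sin (θ x) * κ₁)) x := by
      have h1 : HasDerivAt f (deriv f x) x := (hfd x).hasDerivAt
      have h2 : HasDerivAt (fun z => Real.cos (θ z)) (-Real.sin (θ x) * κ₁) x := hθx.cos
      have h3 := ((h1.const_mul κ₂).mul h2)
      exact h3
    have hden : HasDerivAt (fun z => Real.sin (θ z)) (Real.cos (θ x) * κ₁) x := hθx.sin
    have hg : HasDerivAt g
        (((κ₂ * deriv f x * Real.cos (θ x) + κ₂ * f x * (-Real.sin (θ x) * κ₁)) * Real.sin (θ x)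
          - κ₂ * f x * Real.cos (θ x) * (Real.cos (θ x) * κ₁)) / Real.sin (θ x) ^ 2) x :=
      hnum.div hden (ne_of_gt hs)
    have heq : deriv f =ᶠ[nhds x] g := by
      filter_upwards [hIopen.mem_nhds hx] with z hz using hfg z hz
    have hdf2 : HasDerivAt (deriv f)
        (((κ₂ * deriv f x * Real.cos (θ x) + κ₂ * f x * (-Real.sin (θ x) * κ₁)) * Real.sin (θ x)
          - κ₂ * f x * Real.cos (θ x) * (Real.cos (θ x) * κ₁)) / Real.sin (θ x) ^ 2) x :=
      hg.congr_of_eventuallyEq heq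
    have hcomp := hcompat x hx y₀ hy₀
    have hder2 : deriv (fun s => deriv (fun u => β u y₀) s) x
        = ((κ₂ * deriv f x * Real.cos (θ x) + κ₂ * f x * (-Real.sin (θ x) * κ₁)) * Real.sin (θ x)
          - κ₂ * f x * Real.cos (θ x) * (Real.cos (θ x) * κ₁)) / Real.sin (θ x) ^ 2 :=
      hdf2.deriv
    rw [hder2, Real.tan_eq_sin_div_cos] at hcomp
    have hk := hkey x hx
    have hpyth : Real.sin (θ x) ^ 2 + Real.cos (θ x) ^ 2 = 1 := Real.sin_sq_add_cos_sq _
    have hd : deriv f x = κ₂ * f x * Real.cos (θ x) / Real.sin (θ x) := by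
      field_simp; linarith
    rw [hd] at hcomp
    have hbf : f x = β x y₀ := rfl
    rw [← hbf] at hcomp
    field_simp at hcomp
    have h0 : f x * (Real.cos (θ x))^3 * Real.sin (θ x) * (κ₂^2 - κ₁*κ₂ - Real.sin (θ x)^2) = 0 := by
      linear_combination (Real.cos (θ x) * Real.sin (θ x)) * hcomp
    have hbpos : 0 < f x := hb
    have hpos : 0 < f x * (Real.cos (θ x))^3 * Real.sin (θ x) := by positivity
    have h1 : κ₂^2 - κ₁*κ₂ - Real.sin (θ x)^2 = 0 := by
      rcases mul_eq_zero.mp h0 with h | h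
      · exact absurd h (ne_of_gt hpos)
      · exact h
    linarith
  -- θ is constant on I
  set x₀ : ℝ := (a + b) / 2 with hx₀def
  have hx₀ : x₀ ∈ I := by rw [hI]; constructor <;> simp [hx₀def] <;> linarith
  have hconst : ∀ z ∈ I, θ z = θ x₀ := by
    intro z hz
    have h1 := hsq z hz
    have h2 := hsq x₀ hx₀
    have hs1 := hsin z hz; have hs2 := hsin x₀ hx₀
    have hsineq : Real.sin (θ z) = Real.sin (θ x₀) := by
      have : (Real.sin (θ z) - Real.sin (θ x₀)) * (Real.sin (θ z) + Real.sin (θ x₀)) = 0 := by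
        nlinarith
      rcases mul_eq_zero.mp this with h | h
      · linarith
      · linarith
    have hiz := hrange z hz
    have hix := hrange x₀ hx₀
    have hpi := Real.pi_pos
    exact Real.injOn_sin ⟨by linarith [hiz.1], le_of_lt hiz.2⟩
      ⟨by linarith [hix.1], le_of_lt hix.2⟩ hsineq
  have heqc : θ =ᶠ[nhds x₀] fun _ => θ x₀ := by
    filter_upwards [hIopen.mem_nhds hx₀] with z hz using hconst z hz
  have h0 : HasDerivAt θ 0 x₀ := (hasDerivAt_const x₀ (θ x₀)).congr_of_eventuallyEq heqc
  exact (hθ' x₀ hx₀).unique h0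
end

section
/- Let θ(x) = arctan(2Hx) and β(x) = √(1 + 4H²x²) for a nonzero constant H. These satisfy the compatibility equation β'' + tan(θ)·θ'·β' − β·cos²(θ) = 0 for all x if and only if H² = 1/4. -/
open Real

/-! With `a = 2H`, a direct computation gives `β'' + tan θ · θ' · β' - β cos² θ = (a² - 1) / β`.
Since `β > 0`, this vanishes identically (equivalently, at `x = 0`) exactly when `a² = 1`. -/

noncomputable def compatibilityDefect (θ β : ℝ → ℝ) (x : ℝ) : ℝ :=
  deriv (deriv β) x + tan (θ x) * deriv θ x * deriv β x - β x * cos (θ x) ^ 2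

section OneParameterFamily

variable (a : ℝ)

lemma hasDerivAt_sqrt_one_add_sq_mul_sq (x : ℝ) :
    HasDerivAt (fun x => √(1 + a ^ 2 * x ^ 2)) (a ^ 2 * x / √(1 + a ^ 2 * x ^ 2)) x := by
  have hq : HasDerivAt (fun x : ℝ => 1 + a ^ 2 * x ^ 2) (a ^ 2 * (2 * x)) x := by
    simpa using ((hasDerivAt_pow 2 x).const_mul (a ^ 2)).const_add 1
  convert hq.sqrt (by positivity) using 1
  field_simp

lemma deriv_sqrt_one_add_sq_mul_sq :
    deriv (fun x => √(1 + a ^ 2 * x ^ 2)) = fun x => a ^ 2 * x / √(1 + a ^ 2 * x ^ 2) :=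
  funext fun x => (hasDerivAt_sqrt_one_add_sq_mul_sq a x).deriv

lemma deriv_deriv_sqrt_one_add_sq_mul_sq (x : ℝ) :
    deriv (deriv fun x => √(1 + a ^ 2 * x ^ 2)) x
      = a ^ 2 / ((1 + a ^ 2 * x ^ 2) * √(1 + a ^ 2 * x ^ 2)) := by
  have hpos : 0 < 1 + a ^ 2 * x ^ 2 := by positivity
  have hsq := sq_sqrt hpos.le
  rw [deriv_sqrt_one_add_sq_mul_sq,
    (((hasDerivAt_id' x).const_mul (a ^ 2)).fun_div (hasDerivAt_sqrt_one_add_sq_mul_sq a x)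
      (sqrt_pos.mpr hpos).ne').deriv]
  field_simp
  rw [hsq]
  ring

lemma deriv_arctan_mul (x : ℝ) :
    deriv (fun x => arctan (a * x)) x = a / (1 + a ^ 2 * x ^ 2) := by
  rw [(((hasDerivAt_id' x).const_mul a).arctan).deriv, mul_pow]
  ring

lemma compatibilityDefect_arctan_sqrt (x : ℝ) :
    compatibilityDefect (fun x => arctan (a * x)) (fun x => √(1 + a ^ 2 * x ^ 2)) x
      = (a ^ 2 - 1) / √(1 + a ^ 2 * x ^ 2) := by
  have hpos : 0 < 1 + a ^ 2 * x ^ 2 := by positivity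
  have hcos : cos (arctan (a * x)) = 1 / √(1 + a ^ 2 * x ^ 2) := by
    rw [cos_arctan, mul_pow]
  rw [compatibilityDefect, deriv_deriv_sqrt_one_add_sq_mul_sq, deriv_sqrt_one_add_sq_mul_sq,
    deriv_arctan_mul, tan_arctan, hcos]
  field_simp [(sqrt_pos.mpr hpos).ne']

lemma compatibilityDefect_arctan_sqrt_eq_zero_iff :
    (∀ x, compatibilityDefect (fun x => arctan (a * x)) (fun x => √(1 + a ^ 2 * x ^ 2)) x = 0)
      ↔ a ^ 2 = 1 := by
  simp only [compatibilityDefect_arctan_sqrt]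
  constructor
  · intro h
    simpa [sub_eq_zero] using h 0
  · intro h x
    rw [h, sub_self, zero_div]

end OneParameterFamily

theorem stmt_17_general (H : ℝ)
    (θ β : ℝ → ℝ)
    (hθ : θ = fun x => Real.arctan (2 * H * x))
    (hβ : β = fun x => Real.sqrt (1 + 4 * H^2 * x^2)) :
    (∀ x, deriv (deriv β) x + Real.tan (θ x) * deriv θ x * deriv β x
        - β x * (Real.cos (θ x))^2 = 0) ↔ H^2 = 1/4 := by
  have hβ' : β = fun x => √(1 + (2 * H) ^ 2 * x ^ 2) := by
    rw [hβ]
    ring_nf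
  have key := compatibilityDefect_arctan_sqrt_eq_zero_iff (2 * H)
  rw [← hθ, ← hβ'] at key
  unfold compatibilityDefect at key
  rw [key, mul_pow]
  constructor <;> intro h <;> linarith

theorem stmt_17 (H : ℝ) (hH : H ≠ 0)
    (θ β : ℝ → ℝ)
    (hθ : θ = fun x => Real.arctan (2 * H * x))
    (hβ : β = fun x => Real.sqrt (1 + 4 * H^2 * x^2)) :
    (∀ x, deriv (deriv β) x + Real.tan (θ x) * deriv θ x * deriv β x
        - β x * (Real.cos (θ x))^2 = 0) ↔ H^2 = 1/4 :=
  stmt_17_general H θ β hθ hβ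
end

section
/- The map F(x,y) = (x, √(1+x²)·sinh y, √(1+x²)·cosh y, √(1+x²) − 1) into ℝ⁴ with metric dx₁² + dx₂² − dx₃² + dt² satisfies: the first three components lie on the hyperboloid x₁² + x₂² − x₃² = −1 with x₃ > 0; moreover ⟨F_x, F_x⟩ = 1, ⟨F_x, F_y⟩ = 0, and ⟨F_y, F_y⟩ = 1 + x², where ⟨·,·⟩ is the ambient metric applied to the partial derivative vectors. -/
open Real

/-! The height `t = r(x) - 1` makes the `x`-tangent `(1, r' sinh y, r' cosh y, r')` have
its Lorentzian part `-r'²` cancelled by `dt² = r'²`, so `⟨F_x, F_x⟩ = 1` for every profile `r`;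
`⟨F_x, F_y⟩ = 0` since the `sinh y cosh y` terms cancel, and `⟨F_y, F_y⟩ = r²` by
`cosh² - sinh² = 1`. The profile `r = √(1 + x²)` is the one putting `(x, r sinh y, r cosh y)` on the hyperboloid. -/

/-- Pseudo-metric dx₁² + dx₂² − dx₃² + dt² on ℝ⁴ = ℝ³₁ × ℝ. -/
def g4 (u v : ℝ × ℝ × ℝ × ℝ) : ℝ :=
  u.1 * v.1 + u.2.1 * v.2.1 - u.2.2.1 * v.2.2.1 + u.2.2.2 * v.2.2.2

lemma sq_add_sq_sub_sq_sinh_cosh (x r y : ℝ) :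
    x ^ 2 + (r * sinh y) ^ 2 - (r * cosh y) ^ 2 = x ^ 2 - r ^ 2 := by
  linear_combination (-r ^ 2) * cosh_sq_sub_sinh_sq y

lemma g4_tangent_x_self (a y : ℝ) :
    g4 (1, a * sinh y, a * cosh y, a) (1, a * sinh y, a * cosh y, a) = 1 := by
  unfold g4
  linear_combination (-a ^ 2) * cosh_sq_sub_sinh_sq y

lemma g4_tangent_x_tangent_y (a r y : ℝ) :
    g4 (1, a * sinh y, a * cosh y, a) (0, r * cosh y, r * sinh y, 0) = 0 := by
  unfold g4
  ring

lemma g4_tangent_y_self (r y : ℝ) :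
    g4 (0, r * cosh y, r * sinh y, 0) (0, r * cosh y, r * sinh y, 0) = r ^ 2 := by
  unfold g4
  linear_combination r ^ 2 * cosh_sq_sub_sinh_sq y

lemma hasDerivAt_sqrt_one_add_sq (x : ℝ) :
    HasDerivAt (fun s => √(1 + s ^ 2)) (x / √(1 + x ^ 2)) x := by
  have hpos : 0 < √(1 + x ^ 2) := sqrt_pos.2 (by positivity)
  convert ((hasDerivAt_pow 2 x).const_add 1).sqrt (by positivity) using 1
  field_simp
  ring

lemma hasDerivAt_rotation_fst {f : ℝ → ℝ} {a x : ℝ} (hf : HasDerivAt f a x) (y : ℝ) :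
    HasDerivAt (fun s => ((s, f s * sinh y, f s * cosh y, f s - 1) : ℝ × ℝ × ℝ × ℝ))
      (1, a * sinh y, a * cosh y, a) x :=
  (hasDerivAt_id x).prodMk ((hf.mul_const _).prodMk ((hf.mul_const _).prodMk (hf.sub_const 1)))

lemma hasDerivAt_rotation_snd (x r c y : ℝ) :
    HasDerivAt (fun t => ((x, r * sinh t, r * cosh t, c) : ℝ × ℝ × ℝ × ℝ))
      (0, r * cosh y, r * sinh y, 0) y :=
  (hasDerivAt_const y x).prodMk (((hasDerivAt_sinh y).const_mul r).prodMk
    (((hasDerivAt_cosh y).const_mul r).prodMk (hasDerivAt_const y c)))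

theorem stmt_18 (F : ℝ → ℝ → ℝ × ℝ × ℝ × ℝ)
    (hF : F = fun x y =>
      (x, Real.sqrt (1 + x^2) * Real.sinh y, Real.sqrt (1 + x^2) * Real.cosh y,
        Real.sqrt (1 + x^2) - 1)) :
    ∀ x y : ℝ,
      (F x y).1 ^ 2 + (F x y).2.1 ^ 2 - (F x y).2.2.1 ^ 2 = -1 ∧
      0 < (F x y).2.2.1 ∧
      g4 (deriv (fun s => F s y) x) (deriv (fun s => F s y) x) = 1 ∧
      g4 (deriv (fun s => F s y) x) (deriv (fun t => F x t) y) = 0 ∧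
      g4 (deriv (fun t => F x t) y) (deriv (fun t => F x t) y) = 1 + x^2 := by
  subst hF
  intro x y
  have hr_sq : √(1 + x ^ 2) ^ 2 = 1 + x ^ 2 := sq_sqrt (by positivity)
  beta_reduce
  rw [(hasDerivAt_rotation_fst (hasDerivAt_sqrt_one_add_sq x) y).deriv,
    (hasDerivAt_rotation_snd x _ _ y).deriv]
  refine ⟨?_, ?_, g4_tangent_x_self _ y, g4_tangent_x_tangent_y _ _ y, ?_⟩
  · rw [sq_add_sq_sub_sq_sinh_cosh, hr_sq]
    ring
  · exact mul_pos (sqrt_pos.2 (by positivity)) (cosh_pos y)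
  · rw [g4_tangent_y_self, hr_sq]
end

section
/- For c ∈ ℝ with c + 1 > 0 and x > 0 with x² + c > 0, the map F(x,y) = (x·cos(y)/√(c+1), x·sin(y)/√(c+1), √(x²+c+1)/√(c+1), χ(x)), where χ'(x) = √(x²+c)/√(x²+c+1), satisfies: the first three components lie on the hyperboloid x₁² + x₂² − x₃² = −1 with x₃ > 0, and the induced metric from dx₁² + dx₂² − dx₃² + dt² is ⟨F_x,F_x⟩ = 1, ⟨F_x,F_y⟩ = 0, ⟨F_y,F_y⟩ = x²/(c+1); in particular the induced metric dx² + (x²/(c+1))·dy² is flat (has zero Gaussian curvature). -/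
open Real

/-!
F is the rotation surface of the profile curve s ↦ (s/a, √(s² + a²)/a, χ s), a = √(c+1), about
the timelike x₃-axis. For any rotation surface of a curve (r, h, χ) the induced metric is
(r'² − h'² + χ'²) ds² + r² dt², and the first three coordinates satisfy x₁² + x₂² − x₃² = r² − h².
For this profile r² − h² = −1, and the choice of χ' makes the profile unit speed: r'² − h'² + χ'² = 1.
What remains is dx² + (x/a)² dy², whose warping function x/a is linear, hence flat.
-/

noncomputable def rotationSurface (r h χ : ℝ → ℝ) (s t : ℝ) : ℝ × ℝ × ℝ × ℝ :=
  (r s * cos t, r s * sin t, h s, χ s)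

namespace rotationSurface

theorem quadric (r h χ : ℝ → ℝ) (s t : ℝ) :
    (rotationSurface r h χ s t).1 ^ 2 + (rotationSurface r h χ s t).2.1 ^ 2
      - (rotationSurface r h χ s t).2.2.1 ^ 2 = r s ^ 2 - h s ^ 2 := by
  simp only [rotationSurface]
  linear_combination r s ^ 2 * sin_sq_add_cos_sq t

theorem hasDerivAt_profile {r h χ : ℝ → ℝ} {r' h' χ' s : ℝ} (hr : HasDerivAt r r' s) (hh : HasDerivAt h h' s)
    (hχ : HasDerivAt χ χ' s) (t : ℝ) :
    HasDerivAt (fun s => rotationSurface r h χ s t) (r' * cos t, r' * sin t, h', χ') s :=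
  (hr.mul_const _).prodMk ((hr.mul_const _).prodMk (hh.prodMk hχ))

theorem hasDerivAt_angle (r h χ : ℝ → ℝ) (s t : ℝ) :
    HasDerivAt (fun t => rotationSurface r h χ s t) (-(r s * sin t), r s * cos t, 0, 0) t := by
  refine ((hasDerivAt_cos t).const_mul (r s) |>.congr_deriv ?_).prodMk
    (((hasDerivAt_sin t).const_mul (r s)).prodMk
      ((hasDerivAt_const t (h s)).prodMk (hasDerivAt_const t (χ s))))
  ring

end rotationSurface

section InducedMetric

variable (r' h' χ' ρ t : ℝ)

theorem g4_profile_profile :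
    g4 (r' * cos t, r' * sin t, h', χ') (r' * cos t, r' * sin t, h', χ')
      = r' ^ 2 - h' ^ 2 + χ' ^ 2 := by
  simp only [g4]
  linear_combination r' ^ 2 * sin_sq_add_cos_sq t

theorem g4_profile_angle :
    g4 (r' * cos t, r' * sin t, h', χ') (-(ρ * sin t), ρ * cos t, 0, 0) = 0 := by
  simp only [g4]
  ring

theorem g4_angle_angle :
    g4 (-(ρ * sin t), ρ * cos t, 0, 0) (-(ρ * sin t), ρ * cos t, 0, 0) = ρ ^ 2 := by
  simp only [g4]
  linear_combination ρ ^ 2 * sin_sq_add_cos_sq t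

end InducedMetric

section Profile

variable {c x : ℝ}

theorem hasDerivAt_sqrt_sq_add_add_one_div (hx : 0 < x ^ 2 + c + 1) :
    HasDerivAt (fun s => √(s ^ 2 + c + 1) / √(c + 1))
      (x / (√(x ^ 2 + c + 1) * √(c + 1))) x := by
  have hin : HasDerivAt (fun s : ℝ => s ^ 2 + c + 1) (2 * x) x := by
    simpa using ((hasDerivAt_pow 2 x).add_const c).add_const 1
  refine ((hin.sqrt hx.ne').div_const √(c + 1)).congr_deriv ?_
  field_simp

theorem profile_sq_sub_sq (hc : 0 < c + 1) (hx : 0 < x ^ 2 + c + 1) :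
    (x / √(c + 1)) ^ 2 - (√(x ^ 2 + c + 1) / √(c + 1)) ^ 2 = -1 := by
  rw [div_pow, div_pow, sq_sqrt hc.le, sq_sqrt hx.le]
  field_simp
  ring

theorem profile_speed_sq (hc : 0 < c + 1) (hxc : 0 < x ^ 2 + c) :
    (1 / √(c + 1)) ^ 2 - (x / (√(x ^ 2 + c + 1) * √(c + 1))) ^ 2
      + (√(x ^ 2 + c) / √(x ^ 2 + c + 1)) ^ 2 = 1 := by
  have hx : 0 < x ^ 2 + c + 1 := by linarith
  rw [div_pow, div_pow, div_pow, mul_pow, sq_sqrt hc.le, sq_sqrt hx.le, sq_sqrt hxc.le]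
  field_simp
  ring

end Profile

theorem deriv_deriv_div_const (a x : ℝ) : deriv (deriv fun s => s / a) x = 0 := by
  have : deriv (fun s => s / a) = fun _ => 1 / a :=
    funext fun s => ((hasDerivAt_id' s).div_const a).deriv
  rw [this, deriv_const]

theorem stmt_19 (c : ℝ) (hc : c + 1 > 0) (χ : ℝ → ℝ)
    (hχ : ∀ x : ℝ, 0 < x → x^2 + c > 0 →
      HasDerivAt χ (Real.sqrt (x^2 + c) / Real.sqrt (x^2 + c + 1)) x)
    (F : ℝ → ℝ → ℝ × ℝ × ℝ × ℝ)
    (hF : F = fun x y =>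
      (x * Real.cos y / Real.sqrt (c + 1), x * Real.sin y / Real.sqrt (c + 1),
        Real.sqrt (x^2 + c + 1) / Real.sqrt (c + 1), χ x)) :
    ∀ x y : ℝ, 0 < x → x^2 + c > 0 →
      (F x y).1 ^ 2 + (F x y).2.1 ^ 2 - (F x y).2.2.1 ^ 2 = -1 ∧
      0 < (F x y).2.2.1 ∧
      g4 (deriv (fun s => F s y) x) (deriv (fun s => F s y) x) = 1 ∧
      g4 (deriv (fun s => F s y) x) (deriv (fun t => F x t) y) = 0 ∧
      g4 (deriv (fun t => F x t) y) (deriv (fun t => F x t) y) = x^2 / (c + 1) ∧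
      -(deriv (deriv (fun s => s / Real.sqrt (c + 1))) x) /
          (x / Real.sqrt (c + 1)) = 0 := by
  intro x y hx hxc
  have hx1 : 0 < x ^ 2 + c + 1 := by linarith
  obtain rfl : F = rotationSurface (· / √(c + 1)) (fun s => √(s ^ 2 + c + 1) / √(c + 1)) χ := by
    rw [hF]
    funext s t
    simp only [rotationSurface, div_mul_eq_mul_div]
  rw [(rotationSurface.hasDerivAt_profile ((hasDerivAt_id' x).div_const _)
      (hasDerivAt_sqrt_sq_add_add_one_div hx1) (hχ x hx hxc) y).deriv,
    (rotationSurface.hasDerivAt_angle _ _ χ x y).deriv, rotationSurface.quadric,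
    g4_profile_profile, g4_profile_angle, g4_angle_angle]
  refine ⟨profile_sq_sub_sq hc hx1, by simp only [rotationSurface]; positivity,
    profile_speed_sq hc hxc, rfl, by rw [div_pow, sq_sqrt hc.le], ?_⟩
  rw [deriv_deriv_div_const, neg_zero, zero_div]
end
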